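/- KKT perturbation lemma: In the constrained linear maximization setting, assume (Sm1) and (Sm2). Then: (i) w − w* = H (φ − φ*) + ∇g(φ*)ᵀ (λ − λ*) + Δ for some Δ ∈ ℝ^d satisfying ‖Δ‖_{H^{−1}} ≤ (1/4) ‖φ − φ*‖_H + L ‖φ − φ*‖_H ‖λ − λ*‖_W; and (ii) ‖P_G H^{1/2} (φ − φ*)‖_2 ≤ (L/2) ‖φ − φ*‖_H². -/

import Mathlib

open Matrix

noncomputable section

namespace ConstrainedCurvature

variable (d m : ℕ)

/-- The gradient of `f : ℝ^d → ℝ` at `x`, as a vector. -/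
def grad (f : (Fin d → ℝ) → ℝ) (x : Fin d → ℝ) : Fin d → ℝ :=
  fun j => fderiv ℝ f x (Pi.single j 1)

/-- The Jacobian matrix `∇g(x) ∈ ℝ^{m×d}`, whose rows are the gradients `∇g_i(x)ᵀ`. -/
def gradMat (g : (Fin d → ℝ) → Fin m → ℝ) (x : Fin d → ℝ) :
    Matrix (Fin m) (Fin d) ℝ :=
  Matrix.of fun i j => grad d (fun y => g y i) x j

/-- The Hessian matrix `∇²f(x) ∈ ℝ^{d×d}`. -/
def hessMat (f : (Fin d → ℝ) → ℝ) (x : Fin d → ℝ) : Matrix (Fin d) (Fin d) ℝ :=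
  Matrix.of fun j k => grad d (fun y => grad d f y k) x j

/-- The local Hessian `H = ∑ᵢ λ*ᵢ ∇²gᵢ(φ*)`. -/
def Hmat (g : (Fin d → ℝ) → Fin m → ℝ) (xstar : Fin d → ℝ)
    (lamstar : Fin m → ℝ) : Matrix (Fin d) (Fin d) ℝ :=
  ∑ i, lamstar i • hessMat d (fun y => g y i) xstar

/-- The matrix `W = ∇g(φ*) H⁻¹ ∇g(φ*)ᵀ`. -/
def Wmat (g : (Fin d → ℝ) → Fin m → ℝ) (xstar : Fin d → ℝ)
    (lamstar : Fin m → ℝ) : Matrix (Fin m) (Fin m) ℝ :=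
  gradMat d m g xstar * (Hmat d m g xstar lamstar)⁻¹ * (gradMat d m g xstar)ᵀ

/-- The norm `‖x‖_M = (xᵀ M x)^{1/2}` induced by a (positive definite) matrix `M`. -/
def mnorm {k : ℕ} (M : Matrix (Fin k) (Fin k) ℝ) (x : Fin k → ℝ) : ℝ :=
  Real.sqrt (x ⬝ᵥ M.mulVec x)

/-- The Euclidean norm. -/
def enorm {k : ℕ} (x : Fin k → ℝ) : ℝ :=
  Real.sqrt (∑ j, x j ^ 2)

/-- The `ℓ₂` operator norm of a (possibly rectangular) matrix. -/
def opNorm {m' n' : ℕ} (M : Matrix (Fin m') (Fin n') ℝ) : ℝ :=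
  sSup {t | ∃ x : Fin n' → ℝ, enorm x ≤ 1 ∧ t = enorm (M.mulVec x)}

/-- The positive semidefinite square root of a positive semidefinite matrix
(`Matrix.PosSemidef.sqrt` of the older Mathlib, which no longer exists; same definition). -/
def _root_.Matrix.PosSemidef.sqrt {n : Type*} [Fintype n] [DecidableEq n]
    {A : Matrix n n ℝ} (hA : A.PosSemidef) : Matrix n n ℝ :=
  (hA.1.eigenvectorUnitary : Matrix n n ℝ) * diagonal ((↑) ∘ (√·) ∘ hA.1.eigenvalues) *
    (star hA.1.eigenvectorUnitary : Matrix n n ℝ)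

/-- The projection `P_G = H^{-1/2} ∇g(φ*)ᵀ W⁻¹ ∇g(φ*) H^{-1/2}` onto
`G = span{H^{-1/2} ∇gᵢ(φ*)}`. -/
def PG (g : (Fin d → ℝ) → Fin m → ℝ) (xstar : Fin d → ℝ) (lamstar : Fin m → ℝ)
    (hH : (Hmat d m g xstar lamstar).PosSemidef) : Matrix (Fin d) (Fin d) ℝ :=
  hH.sqrt⁻¹ * (gradMat d m g xstar)ᵀ * (Wmat d m g xstar lamstar)⁻¹ *
    gradMat d m g xstar * hH.sqrt⁻¹

lemma _root_.Matrix.PosSemidef.sqrt_mul_self {n : Type*} [Fintype n] [DecidableEq n]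
    {A : Matrix n n ℝ} (hA : A.PosSemidef) : hA.sqrt * hA.sqrt = A := by
  unfold Matrix.PosSemidef.sqrt
  conv_rhs => rw [hA.1.spectral_theorem, Unitary.conjStarAlgAut_apply]
  have hU : (star hA.1.eigenvectorUnitary : Matrix n n ℝ) * (hA.1.eigenvectorUnitary : Matrix n n ℝ) = 1 :=
    Unitary.coe_star_mul_self _
  rw [show ∀ a b c d e : Matrix n n ℝ, a * b * c * (d * e * c) = a * (b * (c * d) * e) * c from
    fun a b c d e => by simp only [Matrix.mul_assoc], hU, Matrix.mul_one, diagonal_mul_diagonal]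
  congr 3
  funext i
  simp [Real.mul_self_sqrt (hA.eigenvalues_nonneg i)]

lemma psd_sqrt_transpose {n : Type*} [Fintype n] [DecidableEq n]
    {A : Matrix n n ℝ} (hA : A.PosSemidef) : hA.sqrtᵀ = hA.sqrt := by
  unfold Matrix.PosSemidef.sqrt
  rw [transpose_mul, transpose_mul, diagonal_transpose, Matrix.mul_assoc]
  simp only [Matrix.star_eq_conjTranspose, conjTranspose_eq_transpose_of_trivial, transpose_transpose]

lemma enorm_eq_norm {k : ℕ} (x : Fin k → ℝ) :
    enorm x = ‖(WithLp.equiv 2 (Fin k → ℝ)).symm x‖ := by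
  rw [EuclideanSpace.norm_eq]
  simp [enorm, Real.norm_eq_abs, sq_abs]

lemma enorm_nonneg {k : ℕ} (x : Fin k → ℝ) : 0 ≤ enorm x := Real.sqrt_nonneg _

lemma enorm_sq {k : ℕ} (x : Fin k → ℝ) : enorm x ^ 2 = x ⬝ᵥ x := by
  rw [enorm, Real.sq_sqrt]
  · simp [dotProduct, sq]
  · exact Finset.sum_nonneg fun i _ => sq_nonneg _

lemma enorm_eq_sqrt_dot {k : ℕ} (x : Fin k → ℝ) : enorm x = Real.sqrt (x ⬝ᵥ x) := by
  simp [enorm, dotProduct, sq]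

lemma enorm_add_le {k : ℕ} (x y : Fin k → ℝ) : enorm (x + y) ≤ enorm x + enorm y := by
  simp only [enorm_eq_norm]
  exact norm_add_le _ _

lemma enorm_smul {k : ℕ} (t : ℝ) (x : Fin k → ℝ) : enorm (t • x) = |t| * enorm x := by
  simp only [enorm_eq_norm]
  rw [show (WithLp.equiv 2 (Fin k → ℝ)).symm (t • x) = t • (WithLp.equiv 2 (Fin k → ℝ)).symm x from rfl]
  rw [norm_smul, Real.norm_eq_abs]

lemma enorm_neg {k : ℕ} (x : Fin k → ℝ) : enorm (-x) = enorm x := by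
  simp [enorm]

lemma abs_dot_le {k : ℕ} (x y : Fin k → ℝ) : |x ⬝ᵥ y| ≤ enorm x * enorm y := by
  have := abs_real_inner_le_norm ((WithLp.equiv 2 (Fin k → ℝ)).symm x)
    ((WithLp.equiv 2 (Fin k → ℝ)).symm y)
  rw [← enorm_eq_norm, ← enorm_eq_norm, PiLp.inner_apply] at this
  simpa [dotProduct, mul_comm] using this


lemma enorm_zero {k : ℕ} : enorm (0 : Fin k → ℝ) = 0 := by simp [enorm]

lemma opNorm_set_nonempty {a b : ℕ} (M : Matrix (Fin a) (Fin b) ℝ) :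
    (0 : ℝ) ∈ {t | ∃ x : Fin b → ℝ, enorm x ≤ 1 ∧ t = enorm (M.mulVec x)} := by
  exact ⟨0, by simp [enorm_zero], by simp [enorm_zero]⟩

lemma enorm_mulVec_le_frob {a b : ℕ} (M : Matrix (Fin a) (Fin b) ℝ) (x : Fin b → ℝ) :
    enorm (M.mulVec x) ≤ Real.sqrt (∑ i, ∑ j, M i j ^ 2) * enorm x := by
  have h1 : ∀ i, (M.mulVec x i) ^ 2 ≤ (∑ j, M i j ^ 2) * (enorm x)^2 := by
    intro i
    have := abs_dot_le (M i) x
    have h2 : (M.mulVec x i) = M i ⬝ᵥ x := rfl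
    rw [h2]
    calc (M i ⬝ᵥ x) ^ 2 = |M i ⬝ᵥ x| ^ 2 := by rw [sq_abs]
    _ ≤ (enorm (M i) * enorm x) ^ 2 := by
        apply pow_le_pow_left₀ (abs_nonneg _) this
    _ = (∑ j, M i j ^ 2) * (enorm x)^2 := by
        rw [mul_pow]
        congr 1
        rw [enorm, Real.sq_sqrt (Finset.sum_nonneg fun i _ => sq_nonneg _)]
  have h3 : enorm (M.mulVec x) ^ 2 ≤ (Real.sqrt (∑ i, ∑ j, M i j ^ 2) * enorm x) ^ 2 := by
    rw [enorm, Real.sq_sqrt (Finset.sum_nonneg fun i _ => sq_nonneg _), mul_pow,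
      Real.sq_sqrt (show (0:ℝ) ≤ ∑ i, ∑ j, M i j ^ 2 from
        Finset.sum_nonneg fun i _ => Finset.sum_nonneg fun j _ => sq_nonneg _),
      Finset.sum_mul]
    exact Finset.sum_le_sum fun i _ => h1 i
  exact (pow_le_pow_iff_left₀ (enorm_nonneg _)
    (mul_nonneg (Real.sqrt_nonneg _) (enorm_nonneg _)) two_ne_zero).mp h3

lemma opNorm_bddAbove {a b : ℕ} (M : Matrix (Fin a) (Fin b) ℝ) :
    BddAbove {t | ∃ x : Fin b → ℝ, enorm x ≤ 1 ∧ t = enorm (M.mulVec x)} := by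
  refine ⟨Real.sqrt (∑ i, ∑ j, M i j ^ 2), ?_⟩
  rintro t ⟨x, hx, rfl⟩
  calc enorm (M.mulVec x) ≤ Real.sqrt (∑ i, ∑ j, M i j ^ 2) * enorm x :=
      enorm_mulVec_le_frob M x
  _ ≤ Real.sqrt (∑ i, ∑ j, M i j ^ 2) * 1 := by
      exact mul_le_mul_of_nonneg_left hx (Real.sqrt_nonneg _)
  _ = _ := mul_one _

lemma opNorm_nonneg {a b : ℕ} (M : Matrix (Fin a) (Fin b) ℝ) : 0 ≤ opNorm M :=
  le_csSup (opNorm_bddAbove M) (opNorm_set_nonempty M)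

lemma enorm_mulVec_le {a b : ℕ} (M : Matrix (Fin a) (Fin b) ℝ) (x : Fin b → ℝ) :
    enorm (M.mulVec x) ≤ opNorm M * enorm x := by
  rcases eq_or_lt_of_le (enorm_nonneg x) with h | h
  · have hsum : ∑ j, x j ^ 2 = 0 :=
      (Real.sqrt_eq_zero (Finset.sum_nonneg fun i _ => sq_nonneg _)).mp h.symm
    have hx : x = 0 := by
      funext j
      have := (Finset.sum_eq_zero_iff_of_nonneg (fun i _ => sq_nonneg (x i))).mp hsum j
        (Finset.mem_univ j)
      exact pow_eq_zero_iff two_ne_zero |>.mp this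
    simp [hx, Matrix.mulVec_zero, enorm_zero]
  · have h1 : enorm ((enorm x)⁻¹ • x) ≤ 1 := by
      rw [enorm_smul, abs_of_pos (inv_pos.mpr h), inv_mul_cancel₀ h.ne']
    have h2 : enorm (M.mulVec ((enorm x)⁻¹ • x)) ≤ opNorm M :=
      le_csSup (opNorm_bddAbove M) ⟨_, h1, rfl⟩
    rw [Matrix.mulVec_smul, enorm_smul, abs_of_pos (inv_pos.mpr h)] at h2
    calc enorm (M.mulVec x) = enorm x * ((enorm x)⁻¹ * enorm (M.mulVec x)) := by
          field_simp
    _ ≤ enorm x * opNorm M := mul_le_mul_of_nonneg_left h2 (le_of_lt h)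
    _ = opNorm M * enorm x := mul_comm _ _

lemma enorm_transpose_mulVec_le {a b : ℕ} (M : Matrix (Fin a) (Fin b) ℝ) (x : Fin a → ℝ) :
    enorm (Mᵀ.mulVec x) ≤ opNorm M * enorm x := by
  set y := Mᵀ.mulVec x with hy
  rcases eq_or_lt_of_le (enorm_nonneg y) with h | h
  · rw [← h]; exact mul_nonneg (opNorm_nonneg M) (enorm_nonneg x)
  · have key : enorm y ^ 2 ≤ enorm x * (opNorm M * enorm y) := by
      have h1 : enorm y ^ 2 = x ⬝ᵥ M.mulVec y := by
        rw [enorm_sq, hy, Matrix.mulVec_transpose, ← Matrix.dotProduct_mulVec]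
      rw [h1]
      calc x ⬝ᵥ M.mulVec y ≤ |x ⬝ᵥ M.mulVec y| := le_abs_self _
      _ ≤ enorm x * enorm (M.mulVec y) := abs_dot_le _ _
      _ ≤ enorm x * (opNorm M * enorm y) :=
          mul_le_mul_of_nonneg_left (enorm_mulVec_le M y) (enorm_nonneg x)
    nlinarith [enorm_nonneg x, opNorm_nonneg M]


lemma mnorm_sq_eq {k : ℕ} (N : Matrix (Fin k) (Fin k) ℝ) (hN : Nᵀ = N) (x : Fin k → ℝ) :
    mnorm (N * N) x = enorm (N.mulVec x) := by
  rw [mnorm, enorm_eq_sqrt_dot]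
  congr 1
  rw [← Matrix.mulVec_mulVec, Matrix.dotProduct_mulVec, ← Matrix.mulVec_transpose, hN]

section sqrtfacts
variable {k : ℕ} {A : Matrix (Fin k) (Fin k) ℝ} (hA : A.PosDef)

lemma sqrt_symm : hA.posSemidef.sqrtᵀ = hA.posSemidef.sqrt := by
  exact psd_sqrt_transpose hA.posSemidef

lemma sqrt_isUnit : IsUnit hA.posSemidef.sqrt.det := by
  have h : hA.posSemidef.sqrt.det * hA.posSemidef.sqrt.det = A.det := by
    rw [← Matrix.det_mul, hA.posSemidef.sqrt_mul_self]
  have := hA.det_pos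
  refine isUnit_iff_ne_zero.mpr fun h0 => ?_
  rw [h0, zero_mul] at h
  exact this.ne h

lemma sqrt_inv_mul_sqrt : hA.posSemidef.sqrt⁻¹ * hA.posSemidef.sqrt = 1 :=
  Matrix.nonsing_inv_mul _ (sqrt_isUnit hA)

lemma sqrt_mul_sqrt_inv : hA.posSemidef.sqrt * hA.posSemidef.sqrt⁻¹ = 1 :=
  Matrix.mul_nonsing_inv _ (sqrt_isUnit hA)

lemma sqrt_inv_symm : (hA.posSemidef.sqrt⁻¹)ᵀ = hA.posSemidef.sqrt⁻¹ := by
  rw [Matrix.transpose_nonsing_inv, sqrt_symm hA]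

lemma inv_eq_sqrt_inv_mul : A⁻¹ = hA.posSemidef.sqrt⁻¹ * hA.posSemidef.sqrt⁻¹ := by
  have h := Matrix.mul_inv_rev hA.posSemidef.sqrt hA.posSemidef.sqrt
  rw [hA.posSemidef.sqrt_mul_self] at h
  exact h

lemma mnorm_self_eq {x : Fin k → ℝ} : mnorm A x = enorm (hA.posSemidef.sqrt.mulVec x) := by
  have h := mnorm_sq_eq hA.posSemidef.sqrt (sqrt_symm hA) x
  rw [hA.posSemidef.sqrt_mul_self] at h
  exact h

lemma mnorm_inv_eq {x : Fin k → ℝ} : mnorm A⁻¹ x = enorm (hA.posSemidef.sqrt⁻¹.mulVec x) := by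
  rw [inv_eq_sqrt_inv_mul hA]
  exact mnorm_sq_eq _ (sqrt_inv_symm hA) x

end sqrtfacts


lemma fderiv_apply_eq (d : ℕ) (f : (Fin d → ℝ) → ℝ) (x u : Fin d → ℝ) :
    fderiv ℝ f x u = ∑ j, grad d f x j * u j := by
  have hu : u = ∑ j, u j • (Pi.single j 1 : Fin d → ℝ) := by
    funext j
    simp [Finset.sum_apply, Pi.single_apply]
  conv_lhs => rw [hu]
  rw [map_sum]
  refine Finset.sum_congr rfl fun j _ => ?_
  rw [ContinuousLinearMap.map_smul]
  simp [grad, mul_comm]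

lemma mulVec_gradMat (d m : ℕ) (g : (Fin d → ℝ) → Fin m → ℝ) (x u : Fin d → ℝ) (i : Fin m) :
    (gradMat d m g x).mulVec u i = fderiv ℝ (fun y => g y i) x u := by
  rw [fderiv_apply_eq]
  simp [Matrix.mulVec, gradMat, dotProduct]

lemma hasDerivAt_along (d m : ℕ) (g : (Fin d → ℝ) → Fin m → ℝ) (hg : ContDiff ℝ 2 g)
    (i : Fin m) (x0 u : Fin d → ℝ) (t : ℝ) :
    HasDerivAt (fun s : ℝ => g (x0 + s • u) i)
      ((gradMat d m g (x0 + t • u)).mulVec u i) t := by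
  have hgi : ContDiff ℝ 2 (fun y => g y i) := contDiff_pi.mp hg i
  have hp : HasDerivAt (fun s : ℝ => x0 + s • u) u t := by
    simpa using ((hasDerivAt_id t).smul_const u).const_add x0
  have hd : DifferentiableAt ℝ (fun y => g y i) (x0 + t • u) :=
    (hgi.differentiable (by norm_num)).differentiableAt
  have h := hd.hasFDerivAt.comp_hasDerivAt t hp
  rw [mulVec_gradMat]
  exact h

lemma continuous_along (d m : ℕ) (g : (Fin d → ℝ) → Fin m → ℝ) (hg : ContDiff ℝ 2 g)
    (i : Fin m) (x0 u : Fin d → ℝ) :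
    Continuous fun t : ℝ => (gradMat d m g (x0 + t • u)).mulVec u i := by
  have hgi : ContDiff ℝ 2 (fun y => g y i) := contDiff_pi.mp hg i
  have h1 : Continuous fun y => fderiv ℝ (fun y => g y i) y :=
    hgi.continuous_fderiv (by norm_num)
  have hp : Continuous fun s : ℝ => x0 + s • u := by continuity
  have : Continuous fun t : ℝ => fderiv ℝ (fun y => g y i) (x0 + t • u) u :=
    (h1.comp hp).clm_apply continuous_const
  simpa only [mulVec_gradMat] using this


lemma key_integral (d m : ℕ) (g : (Fin d → ℝ) → Fin m → ℝ) (hg : ContDiff ℝ 2 g)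
    (xstar xv : Fin d → ℝ)
    (hxstarAct : ∀ i, g xstar i = 0) (hxvAct : ∀ i, g xv i = 0)
    (B : Matrix (Fin m) (Fin m) ℝ) (C : ℝ)
    (hbound : ∀ t ∈ Set.Icc (0:ℝ) 1,
      enorm (B.mulVec ((gradMat d m g (xstar + t • (xv - xstar)) - gradMat d m g xstar).mulVec
        (xv - xstar))) ≤ C * t) :
    enorm (B.mulVec ((gradMat d m g xstar).mulVec (xv - xstar))) ≤ C / 2 := by
  set u := xv - xstar with hu
  set p : ℝ → Fin d → ℝ := fun t => xstar + t • u with hp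
  set a := (gradMat d m g xstar).mulVec u with ha
  set q : ℝ → Fin m → ℝ := fun t => (gradMat d m g (p t)).mulVec u with hq
  have hqc : ∀ i, Continuous fun t => q t i := fun i => continuous_along d m g hg i xstar u
  have hp0 : p 0 = xstar := by simp [hp]
  have hp1 : p 1 = xv := by
    simp only [hp, one_smul, hu]
    abel
  have hFTC : ∀ i, (∫ t in (0:ℝ)..1, q t i) = 0 := by
    intro i
    have := intervalIntegral.integral_eq_sub_of_hasDerivAt
      (f := fun s => g (p s) i) (f' := fun s => q s i)
      (fun t _ => hasDerivAt_along d m g hg i xstar u t)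
      ((hqc i).intervalIntegrable 0 1)
    rw [this]
    show g (p 1) i - g (p 0) i = 0
    rw [hp0, hp1, hxvAct, hxstarAct, sub_zero]
  set F : ℝ → Fin m → ℝ := fun t => B.mulVec (a - q t) with hF
  have hFc : ∀ i, Continuous fun t => F t i := by
    intro i
    have : (fun t => F t i) = fun t => ∑ k, B i k * (a k - q t k) := by
      funext t
      simp [hF, Matrix.mulVec, dotProduct]
    rw [this]
    exact continuous_finset_sum _ fun k _ =>
      continuous_const.mul (continuous_const.sub (hqc k))
  have hFcPi : Continuous F := continuous_pi hFc
  set GE : ℝ → EuclideanSpace ℝ (Fin m) := fun t => (WithLp.equiv 2 (Fin m → ℝ)).symm (F t)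
    with hGE
  have hGEc : Continuous GE :=
    (PiLp.continuous_toLp (p := 2) (β := fun _ : Fin m => ℝ)).comp hFcPi
  have hGEi : IntervalIntegrable GE MeasureTheory.volume 0 1 := hGEc.intervalIntegrable 0 1
  have hscal : ∀ i, (∫ t in (0:ℝ)..1, F t i) = B.mulVec a i := by
    intro i
    have h1 : (fun t => F t i) = fun t => (∑ k, B i k * a k) - ∑ k, B i k * q t k := by
      funext t
      simp [hF, Matrix.mulVec, dotProduct, mul_sub, Finset.sum_sub_distrib]
    rw [h1]
    have hint2 : ∀ k : Fin m, IntervalIntegrable (fun t => B i k * q t k)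
        MeasureTheory.volume 0 1 :=
      fun k => (continuous_const.mul (hqc k)).intervalIntegrable 0 1
    have hSc : Continuous fun t => ∑ k, B i k * q t k :=
      continuous_finset_sum _ fun k _ => continuous_const.mul (hqc k)
    have hzero : (∫ t in (0:ℝ)..1, ∑ k, B i k * q t k) = 0 := by
      rw [intervalIntegral.integral_finset_sum (fun k _ => hint2 k)]
      refine Finset.sum_eq_zero fun k _ => ?_
      rw [intervalIntegral.integral_const_mul, hFTC k, mul_zero]
    rw [intervalIntegral.integral_sub intervalIntegrable_const
      (hSc.intervalIntegrable 0 1), hzero, sub_zero, intervalIntegral.integral_const]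
    simp [Matrix.mulVec, dotProduct]
  have hproj : (WithLp.equiv 2 (Fin m → ℝ)) (∫ t in (0:ℝ)..1, GE t) = B.mulVec a := by
    funext i
    have h := (PiLp.proj (𝕜 := ℝ) 2 (fun _ : Fin m => ℝ) i).intervalIntegral_comp_comm hGEi
    have h2 : (fun t => PiLp.proj (𝕜 := ℝ) 2 (fun _ : Fin m => ℝ) i (GE t)) = fun t => F t i :=
      rfl
    rw [h2] at h
    have h3 : PiLp.proj (𝕜 := ℝ) 2 (fun _ : Fin m => ℝ) i (∫ t in (0:ℝ)..1, GE t) =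
        (WithLp.equiv 2 (Fin m → ℝ)) (∫ t in (0:ℝ)..1, GE t) i := rfl
    rw [h3] at h
    rw [← h]
    exact hscal i
  have hnorm_eq : enorm (B.mulVec a) = ‖∫ t in (0:ℝ)..1, GE t‖ := by
    rw [enorm_eq_norm]
    congr 1
    exact (Equiv.symm_apply_eq _).mpr hproj.symm
  have hptwise : ∀ t ∈ Set.Icc (0:ℝ) 1, ‖GE t‖ ≤ C * t := by
    intro t ht
    have h1 : ‖GE t‖ = enorm (F t) := (enorm_eq_norm (F t)).symm
    have h2 : F t = -(B.mulVec ((gradMat d m g (p t) - gradMat d m g xstar).mulVec u)) := by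
      have e1 : a - q t = -((gradMat d m g (p t) - gradMat d m g xstar).mulVec u) := by
        rw [Matrix.sub_mulVec, neg_sub]
      show B.mulVec (a - q t) = _
      rw [e1, Matrix.mulVec_neg]
    rw [h1, h2, enorm_neg]
    exact hbound t ht
  calc enorm (B.mulVec a) = ‖∫ t in (0:ℝ)..1, GE t‖ := hnorm_eq
  _ ≤ ∫ t in (0:ℝ)..1, ‖GE t‖ :=
      intervalIntegral.norm_integral_le_integral_norm zero_le_one
  _ ≤ ∫ t in (0:ℝ)..1, C * t := by
      apply intervalIntegral.integral_mono_on zero_le_one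
        (hGEc.norm.intervalIntegrable 0 1)
        ((continuous_const.mul continuous_id).intervalIntegrable 0 1)
      exact hptwise
  _ = C / 2 := by
      rw [intervalIntegral.integral_const_mul, integral_id]
      ring

lemma dot_mulVec_self {a b : ℕ} (K : Matrix (Fin a) (Fin b) ℝ) (x : Fin b → ℝ) :
    (K.mulVec x) ⬝ᵥ (K.mulVec x) = ((Kᵀ * K).mulVec x) ⬝ᵥ x := by
  rw [Matrix.dotProduct_mulVec, ← Matrix.mulVec_transpose, Matrix.mulVec_mulVec]

lemma dot_transpose {a b : ℕ} (K : Matrix (Fin a) (Fin b) ℝ) (x : Fin a → ℝ) (y : Fin b → ℝ) :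
    (Kᵀ.mulVec x) ⬝ᵥ y = x ⬝ᵥ (K.mulVec y) := by
  rw [dotProduct_comm, Matrix.dotProduct_mulVec, Matrix.vecMul_transpose,
    dotProduct_comm]

lemma dot_sqrt_inv {k : ℕ} {A : Matrix (Fin k) (Fin k) ℝ} (hA : A.PosDef) (x : Fin k → ℝ) :
    (hA.posSemidef.sqrt⁻¹.mulVec x) ⬝ᵥ (hA.posSemidef.sqrt⁻¹.mulVec x) =
      x ⬝ᵥ (A⁻¹.mulVec x) := by
  rw [dot_mulVec_self, sqrt_inv_symm hA, ← inv_eq_sqrt_inv_mul hA, dotProduct_comm]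


/-- the KKT perturbation lemma. -/
theorem kkt_perturbation (d m : ℕ)
    (hd : 1 ≤ d) (hm : 1 ≤ m) (hmd : m ≤ d)
    (g : (Fin d → ℝ) → Fin m → ℝ) (hg : ContDiff ℝ 2 g)
    (hconv : ∀ i, ConvexOn ℝ Set.univ fun x => g x i)
    (wstar wv xstar xv : Fin d → ℝ)
    (hxstarAct : ∀ i, g xstar i = 0) (hxvAct : ∀ i, g xv i = 0)
    (hxstarMax : ∀ x : Fin d → ℝ, (∀ i, g x i ≤ 0) → x ⬝ᵥ wstar ≤ xstar ⬝ᵥ wstar)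
    (hxvMax : ∀ x : Fin d → ℝ, (∀ i, g x i ≤ 0) → x ⬝ᵥ wv ≤ xv ⬝ᵥ wv)
    (lamstar lamv : Fin m → ℝ)
    (hlamstar : ∀ i, 0 ≤ lamstar i) (hlamv : ∀ i, 0 ≤ lamv i)
    (hKKTstar : wstar = (gradMat d m g xstar)ᵀ.mulVec lamstar)
    (hKKTv : wv = (gradMat d m g xv)ᵀ.mulVec lamv)
    (hH : (Hmat d m g xstar lamstar).PosDef)
    (hW : (Wmat d m g xstar lamstar).PosDef)
    (L : ℝ) (hL : 0 < L)
    -- smoothness condition (Sm1)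
    (hSm1 : mnorm (Hmat d m g xstar lamstar)⁻¹
        ((gradMat d m g xv - gradMat d m g xstar)ᵀ.mulVec lamstar -
          (Hmat d m g xstar lamstar).mulVec (xv - xstar)) ≤
      1 / 4 * mnorm (Hmat d m g xstar lamstar) (xv - xstar))
    -- smoothness condition (Sm2)
    (hSm2 : ∀ x : Fin d → ℝ,
      opNorm (hW.posSemidef.sqrt⁻¹ * (gradMat d m g x - gradMat d m g xstar) *
          hH.posSemidef.sqrt⁻¹) ≤
        L * mnorm (Hmat d m g xstar lamstar) (x - xstar))
    :
    (∃ Δ : Fin d → ℝ,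
      wv - wstar = (Hmat d m g xstar lamstar).mulVec (xv - xstar) +
          (gradMat d m g xstar)ᵀ.mulVec (lamv - lamstar) + Δ ∧
      mnorm (Hmat d m g xstar lamstar)⁻¹ Δ ≤
        1 / 4 * mnorm (Hmat d m g xstar lamstar) (xv - xstar) +
          L * mnorm (Hmat d m g xstar lamstar) (xv - xstar) *
            mnorm (Wmat d m g xstar lamstar) (lamv - lamstar)) ∧
    enorm ((PG d m g xstar lamstar hH.posSemidef).mulVec
        (hH.posSemidef.sqrt.mulVec (xv - xstar))) ≤
      L / 2 * mnorm (Hmat d m g xstar lamstar) (xv - xstar) ^ 2 := by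
  have hdet_H := hH.det_pos.ne'.isUnit
  have hdet_W := hW.det_pos.ne'.isUnit
  have hHsymm : (Hmat d m g xstar lamstar)ᵀ = Hmat d m g xstar lamstar := by
    have h := hH.1
    rwa [Matrix.IsHermitian, Matrix.conjTranspose_eq_transpose_of_trivial] at h
  have hWsymm : (Wmat d m g xstar lamstar)ᵀ = Wmat d m g xstar lamstar := by
    have h := hW.1
    rwa [Matrix.IsHermitian, Matrix.conjTranspose_eq_transpose_of_trivial] at h
  constructor
  · -- part (i)
    refine ⟨(gradMat d m g xv - gradMat d m g xstar)ᵀ.mulVec lamstar -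
        (Hmat d m g xstar lamstar).mulVec (xv - xstar) +
        (gradMat d m g xv - gradMat d m g xstar)ᵀ.mulVec (lamv - lamstar), ?_, ?_⟩
    · rw [hKKTv, hKKTstar]
      simp only [Matrix.transpose_sub, Matrix.sub_mulVec, Matrix.mulVec_sub]
      abel
    · have htri : mnorm (Hmat d m g xstar lamstar)⁻¹
          (((gradMat d m g xv - gradMat d m g xstar)ᵀ.mulVec lamstar -
            (Hmat d m g xstar lamstar).mulVec (xv - xstar)) +
            (gradMat d m g xv - gradMat d m g xstar)ᵀ.mulVec (lamv - lamstar)) ≤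
          mnorm (Hmat d m g xstar lamstar)⁻¹
            ((gradMat d m g xv - gradMat d m g xstar)ᵀ.mulVec lamstar -
              (Hmat d m g xstar lamstar).mulVec (xv - xstar)) +
          mnorm (Hmat d m g xstar lamstar)⁻¹
            ((gradMat d m g xv - gradMat d m g xstar)ᵀ.mulVec (lamv - lamstar)) := by
        rw [mnorm_inv_eq hH, mnorm_inv_eq hH, mnorm_inv_eq hH, Matrix.mulVec_add]
        exact enorm_add_le _ _
      have h2 : mnorm (Hmat d m g xstar lamstar)⁻¹
          ((gradMat d m g xv - gradMat d m g xstar)ᵀ.mulVec (lamv - lamstar)) ≤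
          L * mnorm (Hmat d m g xstar lamstar) (xv - xstar) *
            mnorm (Wmat d m g xstar lamstar) (lamv - lamstar) := by
        have e1 : hW.posSemidef.sqrt⁻¹.mulVec (hW.posSemidef.sqrt.mulVec (lamv - lamstar))
            = lamv - lamstar := by
          rw [Matrix.mulVec_mulVec, sqrt_inv_mul_sqrt hW, Matrix.one_mulVec]
        have hMt : hH.posSemidef.sqrt⁻¹.mulVec
            ((gradMat d m g xv - gradMat d m g xstar)ᵀ.mulVec (lamv - lamstar)) =
            (hW.posSemidef.sqrt⁻¹ * (gradMat d m g xv - gradMat d m g xstar) *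
              hH.posSemidef.sqrt⁻¹)ᵀ.mulVec
              (hW.posSemidef.sqrt.mulVec (lamv - lamstar)) := by
          rw [Matrix.transpose_mul, Matrix.transpose_mul, sqrt_inv_symm hH, sqrt_inv_symm hW,
            ← Matrix.mulVec_mulVec, ← Matrix.mulVec_mulVec, e1]
        rw [mnorm_inv_eq hH, hMt, mnorm_self_eq hW]
        calc enorm ((hW.posSemidef.sqrt⁻¹ * (gradMat d m g xv - gradMat d m g xstar) *
              hH.posSemidef.sqrt⁻¹)ᵀ.mulVec (hW.posSemidef.sqrt.mulVec (lamv - lamstar)))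
            ≤ opNorm (hW.posSemidef.sqrt⁻¹ * (gradMat d m g xv - gradMat d m g xstar) *
                hH.posSemidef.sqrt⁻¹) *
              enorm (hW.posSemidef.sqrt.mulVec (lamv - lamstar)) :=
            enorm_transpose_mulVec_le _ _
        _ ≤ (L * mnorm (Hmat d m g xstar lamstar) (xv - xstar)) *
              enorm (hW.posSemidef.sqrt.mulVec (lamv - lamstar)) :=
            mul_le_mul_of_nonneg_right (hSm2 xv) (enorm_nonneg _)
        _ = L * mnorm (Hmat d m g xstar lamstar) (xv - xstar) *
              enorm (hW.posSemidef.sqrt.mulVec (lamv - lamstar)) := by ring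
      calc mnorm (Hmat d m g xstar lamstar)⁻¹ _ ≤ _ := htri
      _ ≤ 1 / 4 * mnorm (Hmat d m g xstar lamstar) (xv - xstar) +
            L * mnorm (Hmat d m g xstar lamstar) (xv - xstar) *
              mnorm (Wmat d m g xstar lamstar) (lamv - lamstar) := add_le_add hSm1 h2
  · -- part (ii)
    have hstep : (PG d m g xstar lamstar hH.posSemidef).mulVec
        (hH.posSemidef.sqrt.mulVec (xv - xstar)) =
        hH.posSemidef.sqrt⁻¹.mulVec ((gradMat d m g xstar)ᵀ.mulVec
          ((Wmat d m g xstar lamstar)⁻¹.mulVec ((gradMat d m g xstar).mulVec (xv - xstar)))) := by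
      show (hH.posSemidef.sqrt⁻¹ * (gradMat d m g xstar)ᵀ * (Wmat d m g xstar lamstar)⁻¹ *
          gradMat d m g xstar * hH.posSemidef.sqrt⁻¹).mulVec
          (hH.posSemidef.sqrt.mulVec (xv - xstar)) = _
      rw [Matrix.mulVec_mulVec, Matrix.mul_assoc _ hH.posSemidef.sqrt⁻¹ hH.posSemidef.sqrt,
        sqrt_inv_mul_sqrt hH, Matrix.mul_one, ← Matrix.mulVec_mulVec, ← Matrix.mulVec_mulVec,
        ← Matrix.mulVec_mulVec]
    have hdot : (hH.posSemidef.sqrt⁻¹.mulVec ((gradMat d m g xstar)ᵀ.mulVec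
          ((Wmat d m g xstar lamstar)⁻¹.mulVec ((gradMat d m g xstar).mulVec (xv - xstar)))))
          ⬝ᵥ (hH.posSemidef.sqrt⁻¹.mulVec ((gradMat d m g xstar)ᵀ.mulVec
          ((Wmat d m g xstar lamstar)⁻¹.mulVec ((gradMat d m g xstar).mulVec (xv - xstar))))) =
        (hW.posSemidef.sqrt⁻¹.mulVec ((gradMat d m g xstar).mulVec (xv - xstar))) ⬝ᵥ
          (hW.posSemidef.sqrt⁻¹.mulVec ((gradMat d m g xstar).mulVec (xv - xstar))) := by
      rw [dot_sqrt_inv hH, dot_sqrt_inv hW, dot_transpose]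
      have : (gradMat d m g xstar).mulVec ((Hmat d m g xstar lamstar)⁻¹.mulVec
          ((gradMat d m g xstar)ᵀ.mulVec
            ((Wmat d m g xstar lamstar)⁻¹.mulVec ((gradMat d m g xstar).mulVec (xv - xstar))))) =
          (Wmat d m g xstar lamstar).mulVec
            ((Wmat d m g xstar lamstar)⁻¹.mulVec ((gradMat d m g xstar).mulVec (xv - xstar))) := by
        rw [Matrix.mulVec_mulVec, Matrix.mulVec_mulVec]
        rfl
      rw [this,
        Matrix.mulVec_mulVec ((gradMat d m g xstar).mulVec (xv - xstar))
          (Wmat d m g xstar lamstar) (Wmat d m g xstar lamstar)⁻¹,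
        Matrix.mul_nonsing_inv _ hdet_W, Matrix.one_mulVec, dotProduct_comm]
    have hmain : enorm (hW.posSemidef.sqrt⁻¹.mulVec
        ((gradMat d m g xstar).mulVec (xv - xstar)))
        ≤ (L * mnorm (Hmat d m g xstar lamstar) (xv - xstar) ^ 2) / 2 := by
      apply key_integral d m g hg xstar xv hxstarAct hxvAct
      intro t ht
      have e2 : hW.posSemidef.sqrt⁻¹.mulVec
          ((gradMat d m g (xstar + t • (xv - xstar)) - gradMat d m g xstar).mulVec
            (xv - xstar)) =
          (hW.posSemidef.sqrt⁻¹ * (gradMat d m g (xstar + t • (xv - xstar)) -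
            gradMat d m g xstar) * hH.posSemidef.sqrt⁻¹).mulVec
            (hH.posSemidef.sqrt.mulVec (xv - xstar)) := by
        rw [Matrix.mulVec_mulVec, Matrix.mulVec_mulVec,
          Matrix.mul_assoc _ hH.posSemidef.sqrt⁻¹ hH.posSemidef.sqrt,
          sqrt_inv_mul_sqrt hH, Matrix.mul_one]
      rw [e2]
      have hsmul : mnorm (Hmat d m g xstar lamstar) (t • (xv - xstar)) =
          |t| * mnorm (Hmat d m g xstar lamstar) (xv - xstar) := by
        rw [mnorm_self_eq hH, mnorm_self_eq hH, Matrix.mulVec_smul, enorm_smul]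
      calc enorm ((hW.posSemidef.sqrt⁻¹ * (gradMat d m g (xstar + t • (xv - xstar)) -
            gradMat d m g xstar) * hH.posSemidef.sqrt⁻¹).mulVec
            (hH.posSemidef.sqrt.mulVec (xv - xstar)))
          ≤ opNorm (hW.posSemidef.sqrt⁻¹ * (gradMat d m g (xstar + t • (xv - xstar)) -
              gradMat d m g xstar) * hH.posSemidef.sqrt⁻¹) *
            enorm (hH.posSemidef.sqrt.mulVec (xv - xstar)) := enorm_mulVec_le _ _
      _ ≤ (L * mnorm (Hmat d m g xstar lamstar) (xstar + t • (xv - xstar) - xstar)) *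
            enorm (hH.posSemidef.sqrt.mulVec (xv - xstar)) :=
          mul_le_mul_of_nonneg_right (hSm2 _) (enorm_nonneg _)
      _ = L * mnorm (Hmat d m g xstar lamstar) (xv - xstar) ^ 2 * t := by
          rw [add_sub_cancel_left, hsmul, abs_of_nonneg ht.1, ← mnorm_self_eq hH]
          ring
    rw [hstep]
    calc enorm (hH.posSemidef.sqrt⁻¹.mulVec ((gradMat d m g xstar)ᵀ.mulVec
          ((Wmat d m g xstar lamstar)⁻¹.mulVec ((gradMat d m g xstar).mulVec (xv - xstar)))))
        = enorm (hW.posSemidef.sqrt⁻¹.mulVec ((gradMat d m g xstar).mulVec (xv - xstar))) := by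
          rw [enorm_eq_sqrt_dot, hdot, ← enorm_eq_sqrt_dot]
    _ ≤ (L * mnorm (Hmat d m g xstar lamstar) (xv - xstar) ^ 2) / 2 := hmain
    _ = L / 2 * mnorm (Hmat d m g xstar lamstar) (xv - xstar) ^ 2 := by ring

end ConstrainedCurvature
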